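/- arXiv:1311.2020 — 3 statements merged into one kernel-verified Lean document; each statement's English description precedes it below -/
import Mathlib

section
/- For every smooth compactly supported function v : ℂ → ℂ and every C²-smooth function φ : ℂ → ℝ, one has the norm identity ∫_ℂ |∂̄v - v·∂̄φ|² dA - ∫_ℂ |∂v + v·∂φ|² dA = 2 ∫_ℂ |v|² Δ̂φ dA, where ∂̄ = (∂ₓ + i∂_y)/2, ∂ = (∂ₓ - i∂_y)/2, and Δ̂ = (∂ₓ² + ∂_y²)/4 is the normalized Laplacian. -/
open MeasureTheory Complex Real Filter Topology

/-- Wirtinger derivative ∂̄ = (∂ₓ + i ∂_y)/2. -/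
noncomputable def dbar (f : ℂ → ℂ) (z : ℂ) : ℂ :=
  (fderiv ℝ f z 1 + Complex.I * fderiv ℝ f z Complex.I) / 2

/-- Wirtinger derivative ∂ = (∂ₓ - i ∂_y)/2. -/
noncomputable def dee (f : ℂ → ℂ) (z : ℂ) : ℂ :=
  (fderiv ℝ f z 1 - Complex.I * fderiv ℝ f z Complex.I) / 2

/-- ∂̄ applied to a real-valued function (viewed as complex-valued). -/
noncomputable def dbarR (φ : ℂ → ℝ) (z : ℂ) : ℂ := dbar (fun w => (φ w : ℂ)) z

/-- ∂ applied to a real-valued function (viewed as complex-valued). -/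
noncomputable def deeR (φ : ℂ → ℝ) (z : ℂ) : ℂ := dee (fun w => (φ w : ℂ)) z

/-- Normalized Laplacian Δ̂ = (∂ₓ² + ∂_y²)/4. -/
noncomputable def lapHat (φ : ℂ → ℝ) (z : ℂ) : ℝ :=
  (fderiv ℝ (fun w => fderiv ℝ φ w 1) z 1 +
   fderiv ℝ (fun w => fderiv ℝ φ w Complex.I) z Complex.I) / 4

/-- `u` solves `∂̄ u = f` in the sense of distributions. -/
def IsDbarSol (u f : ℂ → ℂ) : Prop :=
  ∀ ψ : ℂ → ℂ, ContDiff ℝ (⊤ : ℕ∞) ψ → HasCompactSupport ψ →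
    ∫ z : ℂ, f z * ψ z = -∫ z : ℂ, u z * dbar ψ z

open ComplexConjugate

/- ### Auxiliary lemmas -/

lemma ptwise (a b u : ℂ) (p q : ℝ) :
    ‖(a + Complex.I * b) / 2 - u * (((p : ℂ) + Complex.I * (q : ℂ)) / 2)‖ ^ 2 -
      ‖(a - Complex.I * b) / 2 + u * (((p : ℂ) - Complex.I * (q : ℂ)) / 2)‖ ^ 2 =
    (a * conj b).im - (p * (a * conj u).re + q * (b * conj u).re) := by
  simp only [Complex.sq_norm, Complex.normSq_apply, Complex.mul_re,
    Complex.mul_im, Complex.add_re, Complex.add_im, Complex.sub_re, Complex.sub_im,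
    Complex.div_re, Complex.div_im, Complex.normSq_apply, Complex.I_re, Complex.I_im,
    Complex.conj_re, Complex.conj_im, Complex.ofReal_re, Complex.ofReal_im,
    Complex.re_ofNat, Complex.im_ofNat]
  ring

lemma fderiv_ofReal_comp {φ : ℂ → ℝ} {z : ℂ} (hφ : DifferentiableAt ℝ φ z) (t : ℂ) :
    fderiv ℝ (fun w => (φ w : ℂ)) z t = ((fderiv ℝ φ z t : ℝ) : ℂ) := by
  have H : HasFDerivAt (fun w => (φ w : ℂ)) (Complex.ofRealCLM.comp (fderiv ℝ φ z)) z :=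
    Complex.ofRealCLM.hasFDerivAt.comp z hφ.hasFDerivAt
  rw [H.fderiv]; rfl

lemma fderiv_conj_comp {v : ℂ → ℂ} {z : ℂ} (hv : DifferentiableAt ℝ v z) (t : ℂ) :
    fderiv ℝ (fun w => conj (v w)) z t = conj (fderiv ℝ v z t) := by
  have H : HasFDerivAt (fun w => conj (v w))
      ((Complex.conjCLE.toContinuousLinearMap).comp (fderiv ℝ v z)) z :=
    (Complex.conjCLE.toContinuousLinearMap).hasFDerivAt.comp z hv.hasFDerivAt
  rw [H.fderiv]; rfl

lemma fderiv_swap {f : ℂ → ℂ} (hf : ContDiff ℝ (⊤ : ℕ∞) f) (z s t : ℂ) :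
    fderiv ℝ (fun w => fderiv ℝ f w s) z t = fderiv ℝ (fun w => fderiv ℝ f w t) z s := by
  have hdf : Differentiable ℝ (fderiv ℝ f) :=
    (hf.fderiv_right (m := (⊤ : ℕ∞)) (by simp)).differentiable (by simp)
  have key : ∀ u r : ℂ, fderiv ℝ (fun w => fderiv ℝ f w u) z r
      = fderiv ℝ (fderiv ℝ f) z r u := by
    intro u r
    rw [fderiv_clm_apply (hdf z) (differentiableAt_const u)]
    simp
  rw [key, key]
  exact second_derivative_symmetric (fun y => (hf.differentiable (by simp) y).hasFDerivAt)
    (hdf z).hasFDerivAt t s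

lemma fderiv_normsq {v : ℂ → ℂ} {z : ℂ} (hv : DifferentiableAt ℝ v z) (t : ℂ) :
    fderiv ℝ (fun w => (v w).re ^ 2 + (v w).im ^ 2) z t
      = 2 * ((fderiv ℝ v z t) * conj (v z)).re := by
  have hre : HasFDerivAt (fun w => (v w).re) (Complex.reCLM.comp (fderiv ℝ v z)) z :=
    Complex.reCLM.hasFDerivAt.comp z hv.hasFDerivAt
  have him : HasFDerivAt (fun w => (v w).im) (Complex.imCLM.comp (fderiv ℝ v z)) z :=
    Complex.imCLM.hasFDerivAt.comp z hv.hasFDerivAt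
  have h2 : (fun w => (v w).re ^ 2 + (v w).im ^ 2) =
      (fun w => (v w).re * (v w).re + (v w).im * (v w).im) := by
    funext w; ring
  have H : HasFDerivAt (fun w => (v w).re * (v w).re + (v w).im * (v w).im) _ z :=
    (hre.mul hre).add (him.mul him)
  rw [h2, H.fderiv]
  simp [Complex.mul_re, Complex.conj_re, Complex.conj_im]
  ring

lemma int_im_zero {v : ℂ → ℂ} (hv : ContDiff ℝ (⊤ : ℕ∞) v) (hvc : HasCompactSupport v) :
    ∫ z : ℂ, ((fderiv ℝ v z 1) * conj (fderiv ℝ v z Complex.I)).im = 0 := by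
  have hv1 : Differentiable ℝ v := hv.differentiable (by simp)
  have hA : ∀ t : ℂ, ContDiff ℝ (⊤ : ℕ∞) (fun z => fderiv ℝ v z t) := fun t =>
    (hv.fderiv_right (m := (⊤ : ℕ∞)) (by simp)).clm_apply contDiff_const
  have hAc : ∀ t : ℂ, HasCompactSupport (fun z => fderiv ℝ v z t) := fun t =>
    hvc.fderiv_apply ℝ t
  have hconj : ContDiff ℝ (⊤ : ℕ∞) (fun z => conj (v z)) :=
    Complex.conjCLE.toContinuousLinearMap.contDiff.comp hv
  have hconjc : HasCompactSupport (fun z => conj (v z)) := by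
    have : (fun z => conj (v z)) = (fun c : ℂ => conj c) ∘ v := rfl
    rw [this]; exact hvc.comp_left (by simp)
  have hccont : Continuous (fun z => fderiv ℝ (fun w => fderiv ℝ v w 1) z Complex.I) :=
    (((hA 1).fderiv_right (m := (⊤ : ℕ∞)) (by simp)).clm_apply contDiff_const).continuous
  have hcc : HasCompactSupport (fun z => fderiv ℝ (fun w => fderiv ℝ v w 1) z Complex.I) :=
    (hAc 1).fderiv_apply ℝ Complex.I
  have hab_int : Integrable (fun z : ℂ => fderiv ℝ v z 1 * conj (fderiv ℝ v z Complex.I)) := by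
    exact ((hA 1).continuous.mul (Complex.continuous_conj.comp (hA Complex.I).continuous)
      ).integrable_of_hasCompactSupport ((hAc 1).mul_right)
  have h2a : ∫ z : ℂ, (fderiv ℝ v z 1) * conj (fderiv ℝ v z Complex.I)
      = -∫ z : ℂ, fderiv ℝ (fun w => fderiv ℝ v w 1) z Complex.I * conj (v z) := by
    have e : ∀ z : ℂ, fderiv ℝ (fun w => conj (v w)) z Complex.I
        = conj (fderiv ℝ v z Complex.I) := fun z => fderiv_conj_comp (hv1 z) _
    have key := integral_mul_fderiv_eq_neg_fderiv_mul_of_integrable (μ := volume)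
      (f := fun z => fderiv ℝ v z 1) (g := fun z => conj (v z)) (v := Complex.I)
      ((hccont.mul (Complex.continuous_conj.comp hv.continuous)
        ).integrable_of_hasCompactSupport (hcc.mul_right))
      (by simp only [e]; exact hab_int)
      (((hA 1).continuous.mul (Complex.continuous_conj.comp hv.continuous)
        ).integrable_of_hasCompactSupport ((hAc 1).mul_right))
      (fun x _ => (hA 1).differentiable (by simp) x) (fun x _ => hconj.differentiable (by simp) x)
    simpa only [e] using key
  have h2b : ∫ z : ℂ, (fderiv ℝ v z Complex.I) * conj (fderiv ℝ v z 1)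
      = -∫ z : ℂ, fderiv ℝ (fun w => fderiv ℝ v w 1) z Complex.I * conj (v z) := by
    have e : ∀ z : ℂ, fderiv ℝ (fun w => conj (v w)) z 1
        = conj (fderiv ℝ v z 1) := fun z => fderiv_conj_comp (hv1 z) _
    have esw : ∀ z : ℂ, fderiv ℝ (fun w => fderiv ℝ v w Complex.I) z 1
        = fderiv ℝ (fun w => fderiv ℝ v w 1) z Complex.I := fun z => fderiv_swap hv z _ _
    have key := integral_mul_fderiv_eq_neg_fderiv_mul_of_integrable (μ := volume)
      (f := fun z => fderiv ℝ v z Complex.I) (g := fun z => conj (v z)) (v := (1 : ℂ))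
      (by
        simp only [esw]
        exact ((hccont.mul (Complex.continuous_conj.comp hv.continuous)
          ).integrable_of_hasCompactSupport (hcc.mul_right)))
      (by
        simp only [e]
        exact ((hA Complex.I).continuous.mul
          (Complex.continuous_conj.comp (hA 1).continuous)
          ).integrable_of_hasCompactSupport ((hAc Complex.I).mul_right))
      (((hA Complex.I).continuous.mul (Complex.continuous_conj.comp hv.continuous)
        ).integrable_of_hasCompactSupport ((hAc Complex.I).mul_right))
      (fun x _ => (hA Complex.I).differentiable (by simp) x)
      (fun x _ => hconj.differentiable (by simp) x)
    simp only [e, esw] at key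
    exact key
  have hconj_eq : conj (∫ z : ℂ, (fderiv ℝ v z 1) * conj (fderiv ℝ v z Complex.I))
      = ∫ z : ℂ, (fderiv ℝ v z Complex.I) * conj (fderiv ℝ v z 1) := by
    rw [← integral_conj]
    congr 1; funext z
    simp [map_mul, mul_comm]
  have him : (∫ z : ℂ, (fderiv ℝ v z 1) * conj (fderiv ℝ v z Complex.I)).im = 0 := by
    apply Complex.conj_eq_iff_im.mp
    rw [hconj_eq, h2b, ← h2a]
  have := Complex.imCLM.integral_comp_comm hab_int
  simpa [him] using this

lemma cross_ibp {v : ℂ → ℂ} (hv : ContDiff ℝ (⊤ : ℕ∞) v) (hvc : HasCompactSupport v)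
    {φ : ℂ → ℝ} (hφ : ContDiff ℝ 2 φ) (t : ℂ) :
    ∫ z : ℂ, (fderiv ℝ φ z t) * ((fderiv ℝ v z t) * conj (v z)).re
      = -(∫ z : ℂ, (fderiv ℝ (fun w => fderiv ℝ φ w t) z t) *
          ((v z).re ^ 2 + (v z).im ^ 2)) / 2 := by
  have hv1 : Differentiable ℝ v := hv.differentiable (by simp)
  set w : ℂ → ℝ := fun z => (v z).re ^ 2 + (v z).im ^ 2 with hw_def
  have hw_cd : ContDiff ℝ (⊤ : ℕ∞) w := by
    have h1 : ContDiff ℝ (⊤ : ℕ∞) (fun z => (v z).re) := Complex.reCLM.contDiff.comp hv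
    have h2 : ContDiff ℝ (⊤ : ℕ∞) (fun z => (v z).im) := Complex.imCLM.contDiff.comp hv
    exact (h1.pow 2).add (h2.pow 2)
  have hw_c : HasCompactSupport w := by
    have : w = (fun c : ℂ => c.re ^ 2 + c.im ^ 2) ∘ v := rfl
    rw [this]; exact hvc.comp_left (by simp)
  have hp : ContDiff ℝ 1 (fun z => fderiv ℝ φ z t) :=
    (hφ.fderiv_right (m := 1) (by norm_num)).clm_apply contDiff_const
  have hp' : Continuous (fun z => fderiv ℝ (fun w => fderiv ℝ φ w t) z t) :=
    ((hp.fderiv_right (m := 0) (by norm_num)).clm_apply contDiff_const).continuous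
  have hwt_cont : Continuous (fun z => fderiv ℝ w z t) :=
    ((hw_cd.fderiv_right (m := (⊤ : ℕ∞)) (by simp)).clm_apply contDiff_const).continuous
  have hwt_c : HasCompactSupport (fun z => fderiv ℝ w z t) := hw_c.fderiv_apply ℝ t
  have key := integral_mul_fderiv_eq_neg_fderiv_mul_of_integrable (μ := volume)
    (f := fun z => fderiv ℝ φ z t) (g := w) (v := t)
    ((hp'.mul hw_cd.continuous).integrable_of_hasCompactSupport hw_c.mul_left)
    ((hp.continuous.mul hwt_cont).integrable_of_hasCompactSupport hwt_c.mul_left)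
    ((hp.continuous.mul hw_cd.continuous).integrable_of_hasCompactSupport hw_c.mul_left)
    (fun x _ => hp.differentiable one_ne_zero x) (fun x _ => hw_cd.differentiable (by simp) x)
  have e : (fun z : ℂ => (fderiv ℝ φ z t) * ((fderiv ℝ v z t) * conj (v z)).re)
      = fun z => (fderiv ℝ φ z t) * fderiv ℝ w z t / 2 := by
    funext z
    rw [hw_def]
    rw [fderiv_normsq (hv1 z) t]
    ring
  rw [e]
  rw [integral_div, key]

theorem stmt0 (v : ℂ → ℂ) (hv : ContDiff ℝ (⊤ : ℕ∞) v) (hvc : HasCompactSupport v)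
    (φ : ℂ → ℝ) (hφ : ContDiff ℝ 2 φ) :
    (∫ z : ℂ, ‖dbar v z - v z * dbarR φ z‖ ^ 2) -
      (∫ z : ℂ, ‖dee v z + v z * deeR φ z‖ ^ 2) =
    2 * ∫ z : ℂ, ‖v z‖ ^ 2 * lapHat φ z := by
  have hv1 : Differentiable ℝ v := hv.differentiable (by simp)
  have hφ1 : Differentiable ℝ φ := hφ.differentiable two_ne_zero
  have hA : ∀ t : ℂ, ContDiff ℝ (⊤ : ℕ∞) (fun z => fderiv ℝ v z t) := fun t =>
    (hv.fderiv_right (m := (⊤ : ℕ∞)) (by simp)).clm_apply contDiff_const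
  have hφC : ContDiff ℝ 2 (fun z => (φ z : ℂ)) := Complex.ofRealCLM.contDiff.comp hφ
  have hP : ∀ t : ℂ, Continuous (fun z => fderiv ℝ (fun w => (φ w : ℂ)) z t) := fun t =>
    ((hφC.fderiv_right (m := 1) (by norm_num)).clm_apply contDiff_const).continuous
  have hp : ∀ t : ℂ, ContDiff ℝ 1 (fun z => fderiv ℝ φ z t) := fun t =>
    (hφ.fderiv_right (m := 1) (by norm_num)).clm_apply contDiff_const
  have hD : ∀ t : ℂ, Continuous (fun z => fderiv ℝ (fun w => fderiv ℝ φ w t) z t) := fun t =>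
    (((hp t).fderiv_right (m := 0) (by norm_num)).clm_apply contDiff_const).continuous
  have hvcont : Continuous v := hv.continuous
  have hdbarv : Continuous (fun z => dbar v z) := by
    unfold dbar
    exact (((hA 1).continuous).add (continuous_const.mul (hA Complex.I).continuous)).div_const 2
  have hdeev : Continuous (fun z => dee v z) := by
    unfold dee
    exact (((hA 1).continuous).sub (continuous_const.mul (hA Complex.I).continuous)).div_const 2
  have hdbarR : Continuous (fun z => dbarR φ z) := by
    unfold dbarR dbar
    exact ((hP 1).add (continuous_const.mul (hP Complex.I))).div_const 2
  have hdeeR : Continuous (fun z => deeR φ z) := by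
    unfold deeR dee
    exact ((hP 1).sub (continuous_const.mul (hP Complex.I))).div_const 2
  have hvz : ∀ z ∉ tsupport v, v z = 0 := fun z hz => image_eq_zero_of_notMem_tsupport hz
  have hfz : ∀ z ∉ tsupport v, fderiv ℝ v z = 0 := fun z hz => fderiv_of_notMem_tsupport ℝ hz
  have hInt : ∀ f : ℂ → ℝ, Continuous f → (∀ z ∉ tsupport v, f z = 0) → Integrable f :=
    fun f hf h0 => hf.integrable_of_hasCompactSupport (HasCompactSupport.intro hvc h0)
  have hf1 : Integrable (fun z : ℂ => ‖dbar v z - v z * dbarR φ z‖ ^ 2) :=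
    hInt _ (((hdbarv.sub (hvcont.mul hdbarR)).norm).pow 2) (fun z hz => by
      simp [dbar, hvz z hz, hfz z hz])
  have hf2 : Integrable (fun z : ℂ => ‖dee v z + v z * deeR φ z‖ ^ 2) :=
    hInt _ (((hdeev.add (hvcont.mul hdeeR)).norm).pow 2) (fun z hz => by
      simp [dee, hvz z hz, hfz z hz])
  have e1 : (fun z : ℂ => ‖dbar v z - v z * dbarR φ z‖ ^ 2
        - ‖dee v z + v z * deeR φ z‖ ^ 2)
      = fun z => ((fderiv ℝ v z 1) * conj (fderiv ℝ v z Complex.I)).im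
        - ((fderiv ℝ φ z 1) * ((fderiv ℝ v z 1) * conj (v z)).re
           + (fderiv ℝ φ z Complex.I) * ((fderiv ℝ v z Complex.I) * conj (v z)).re) := by
    funext z
    have h1 : ∀ t : ℂ, fderiv ℝ (fun w => (φ w : ℂ)) z t = ((fderiv ℝ φ z t : ℝ) : ℂ) :=
      fderiv_ofReal_comp (hφ1 z)
    simp only [dbar, dee, dbarR, deeR, h1]
    exact ptwise _ _ _ _ _
  have hg1 : Integrable (fun z : ℂ =>
      ((fderiv ℝ v z 1) * conj (fderiv ℝ v z Complex.I)).im) :=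
    hInt _ (Complex.continuous_im.comp ((hA 1).continuous.mul
      (Complex.continuous_conj.comp (hA Complex.I).continuous)))
      (fun z hz => by simp [hfz z hz])
  have hcr : ∀ t : ℂ, Integrable (fun z : ℂ =>
      (fderiv ℝ φ z t) * ((fderiv ℝ v z t) * conj (v z)).re) := fun t =>
    hInt _ ((hp t).continuous.mul (Complex.continuous_re.comp ((hA t).continuous.mul
      (Complex.continuous_conj.comp hvcont)))) (fun z hz => by simp [hvz z hz])
  have hg2 : Integrable (fun z : ℂ =>
      (fderiv ℝ φ z 1) * ((fderiv ℝ v z 1) * conj (v z)).re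
      + (fderiv ℝ φ z Complex.I) * ((fderiv ℝ v z Complex.I) * conj (v z)).re) :=
    (hcr 1).add (hcr Complex.I)
  have hDw : ∀ t : ℂ, Integrable (fun z : ℂ =>
      (fderiv ℝ (fun w => fderiv ℝ φ w t) z t) * ((v z).re ^ 2 + (v z).im ^ 2)) := fun t =>
    hInt _ ((hD t).mul (((Complex.continuous_re.comp hvcont).pow 2).add
      ((Complex.continuous_im.comp hvcont).pow 2))) (fun z hz => by simp [hvz z hz])
  have hR : ∫ z : ℂ, ‖v z‖ ^ 2 * lapHat φ z
      = (∫ z : ℂ, ((fderiv ℝ (fun w => fderiv ℝ φ w 1) z 1) * ((v z).re ^ 2 + (v z).im ^ 2)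
          + (fderiv ℝ (fun w => fderiv ℝ φ w Complex.I) z Complex.I)
            * ((v z).re ^ 2 + (v z).im ^ 2))) / 4 := by
    rw [← integral_div]
    congr 1; funext z
    have hn : ‖v z‖ ^ 2 = (v z).re ^ 2 + (v z).im ^ 2 := by
      rw [Complex.sq_norm, Complex.normSq_apply]; ring
    rw [hn]; unfold lapHat; ring
  have hsum := integral_add (hDw 1) (hDw Complex.I)
  rw [← integral_sub hf1 hf2, e1, integral_sub hg1 hg2, int_im_zero hv hvc,
      integral_add (hcr 1) (hcr Complex.I), cross_ibp hv hvc hφ 1,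
      cross_ibp hv hvc hφ Complex.I, hR, hsum]
  ring
end

section
/- For the datum f(z) = -z e^{-|z|²} and solution u(z) = e^{-|z|²} of ∂̄u = f, one has ∫_ℂ |u|² e^{|z|²} dA = ∫_ℂ |f|² e^{|z|²} dA = π; hence the constant 1 in the estimate ∫_ℂ |u|² e^{|z|²} dA ≤ C ∫_ℂ |f|² e^{|z|²} dA cannot be replaced by any C < 1. -/
open MeasureTheory Complex Real Filter Topology

lemma aux_exp_sq (t : ℝ) : Real.exp (-t) ^ 2 * Real.exp t = Real.exp (-t) := by
  rw [pow_two, ← Real.exp_add, ← Real.exp_add]; congr 1; ring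

lemma aux_rpow_two (x : ℂ) : ‖x‖ ^ (2:ℝ) = ‖x‖ ^ 2 := by
  rw [show (2:ℝ) = ((2:ℕ):ℝ) by norm_num, Real.rpow_natCast]

lemma aux_int1 : (∫ z : ℂ, Real.exp (-‖z‖ ^ 2)) = Real.pi := by
  have h := Complex.integral_rpow_mul_exp_neg_rpow (p := 2) (q := 0) one_le_two (by norm_num)
  have e1 : ((0:ℝ)+2)/2 = 1 := by norm_num
  rw [e1, Real.Gamma_one, mul_one] at h
  simp_rw [Real.rpow_zero, one_mul, aux_rpow_two] at h
  rw [h]; ring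

lemma aux_int2 : (∫ z : ℂ, ‖z‖ ^ 2 * Real.exp (-‖z‖ ^ 2)) = Real.pi := by
  have h := Complex.integral_rpow_mul_exp_neg_rpow (p := 2) (q := 2) one_le_two (by norm_num)
  have e1 : ((2:ℝ)+2)/2 = 2 := by norm_num
  rw [e1, Real.Gamma_two, mul_one] at h
  simp_rw [aux_rpow_two] at h
  rw [h]; ring

lemma aux_hasFDerivAt (z : ℂ) : HasFDerivAt (fun w : ℂ => ((Real.exp (-‖w‖ ^ 2) : ℝ) : ℂ))
    (Complex.ofRealCLM.comp ((Real.exp (-‖z‖^2)) • (-(2 • (innerSL ℝ z) : ℂ →L[ℝ] ℝ)))) z := by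
  have h1 : HasFDerivAt (fun w : ℂ => -‖w‖ ^ 2) (-(2 • (innerSL ℝ z) : ℂ →L[ℝ] ℝ)) z :=
    ((hasStrictFDerivAt_norm_sq z).hasFDerivAt).neg
  have h2 := (Real.hasDerivAt_exp (-‖z‖^2)).comp_hasFDerivAt z h1
  exact Complex.ofRealCLM.hasFDerivAt.comp z h2

theorem stmt13 (u f : ℂ → ℂ)
    (hu : u = fun z => (Real.exp (-‖z‖ ^ 2) : ℂ))
    (hf : f = fun z => -z * (Real.exp (-‖z‖ ^ 2) : ℂ)) :
    (∀ z, dbar u z = f z) ∧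
      (∫ z : ℂ, ‖u z‖ ^ 2 * Real.exp (‖z‖ ^ 2)) = Real.pi ∧
      (∫ z : ℂ, ‖f z‖ ^ 2 * Real.exp (‖z‖ ^ 2)) = Real.pi ∧
      ∀ C : ℝ, C < 1 →
        ¬ (∫ z : ℂ, ‖u z‖ ^ 2 * Real.exp (‖z‖ ^ 2)) ≤
            C * ∫ z : ℂ, ‖f z‖ ^ 2 * Real.exp (‖z‖ ^ 2) := by
  subst hu hf
  have hU : (∫ z : ℂ, ‖(fun z : ℂ => ((Real.exp (-‖z‖ ^ 2) : ℝ) : ℂ)) z‖ ^ 2 * Real.exp (‖z‖ ^ 2))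
      = Real.pi := by
    rw [← aux_int1]; congr 1; funext z
    simp only [Complex.norm_real, Real.norm_eq_abs, Real.abs_exp]
    rw [aux_exp_sq]
  have hF : (∫ z : ℂ, ‖(fun z : ℂ => -z * ((Real.exp (-‖z‖ ^ 2) : ℝ) : ℂ)) z‖ ^ 2 * Real.exp (‖z‖ ^ 2))
      = Real.pi := by
    rw [← aux_int2]; congr 1; funext z
    simp only [norm_mul, norm_neg, Complex.norm_real, Real.norm_eq_abs, Real.abs_exp, mul_pow]
    rw [mul_assoc, aux_exp_sq]
  refine ⟨?_, hU, hF, ?_⟩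
  · intro z
    have hd := aux_hasFDerivAt z
    rw [dbar, hd.fderiv]
    have i1 : (inner ℝ z (1:ℂ) : ℝ) = z.re := by simp [Complex.inner]
    have i2 : (inner ℝ z Complex.I : ℝ) = z.im := by simp [Complex.inner]
    simp only [ContinuousLinearMap.comp_apply, ContinuousLinearMap.smul_apply,
      ContinuousLinearMap.neg_apply, ContinuousLinearMap.add_apply, two_smul,
      innerSL_apply_apply, Complex.ofRealCLM_apply, smul_eq_mul]
    rw [i1, i2]
    push_cast
    rw [Complex.ext_iff]
    constructor <;> simp <;> ring
  · intro C hC h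
    rw [hU, hF] at h
    nlinarith [Real.pi_pos]
end

section
/- Let φ : ℂ → ℝ be C² with Δ̂φ > 0 everywhere, and let T v = ∂̄v - v·∂̄φ. If (v_j) ⊂ C_c^∞(ℂ) is a sequence such that (T v_j) is Cauchy in L²(ℂ), then the sequence (v_j √(Δ̂φ)) is Cauchy in L²(ℂ); in particular (v_j) converges in L²_loc(ℂ). -/
open MeasureTheory Complex Real Filter Topology

namespace S18

-- derivative of conj ∘ g
lemma fderiv_conj_apply {g : ℂ → ℂ} {z : ℂ} (hg : DifferentiableAt ℝ g z) (d : ℂ) :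
    fderiv ℝ (fun w => (starRingEnd ℂ) (g w)) z d = (starRingEnd ℂ) (fderiv ℝ g z d) := by
  have h : HasFDerivAt (fun w => (starRingEnd ℂ) (g w))
      ((Complex.conjCLE : ℂ →L[ℝ] ℂ).comp (fderiv ℝ g z)) z :=
    (Complex.conjCLE.hasFDerivAt (x := g z)).comp z hg.hasFDerivAt
  rw [h.fderiv]; rfl

lemma fderiv_ofReal_apply {g : ℂ → ℝ} {z : ℂ} (hg : DifferentiableAt ℝ g z) (d : ℂ) :
    fderiv ℝ (fun w => ((g w : ℝ) : ℂ)) z d = ((fderiv ℝ g z d : ℝ) : ℂ) := by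
  have h : HasFDerivAt (fun w => ((g w : ℝ) : ℂ))
      ((Complex.ofRealCLM : ℝ →L[ℝ] ℂ).comp (fderiv ℝ g z)) z :=
    (Complex.ofRealCLM.hasFDerivAt (x := g z)).comp z hg.hasFDerivAt
  rw [h.fderiv]; rfl

lemma fderiv_mul_apply {g h : ℂ → ℂ} {z : ℂ} (hg : DifferentiableAt ℝ g z)
    (hh : DifferentiableAt ℝ h z) (d : ℂ) :
    fderiv ℝ (fun w => g w * h w) z d = fderiv ℝ g z d * h z + g z * fderiv ℝ h z d := by
  rw [fderiv_fun_mul hg hh]; simp; ring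

lemma fderiv_re_apply {g : ℂ → ℂ} {z : ℂ} (hg : DifferentiableAt ℝ g z) (d : ℂ) :
    fderiv ℝ (fun w => (g w).re) z d = (fderiv ℝ g z d).re := by
  have h : HasFDerivAt (fun w => (g w).re)
      ((Complex.reCLM : ℂ →L[ℝ] ℝ).comp (fderiv ℝ g z)) z :=
    (Complex.reCLM.hasFDerivAt (x := g z)).comp z hg.hasFDerivAt
  rw [h.fderiv]; rfl

lemma fderiv_im_apply {g : ℂ → ℂ} {z : ℂ} (hg : DifferentiableAt ℝ g z) (d : ℂ) :
    fderiv ℝ (fun w => (g w).im) z d = (fderiv ℝ g z d).im := by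
  have h : HasFDerivAt (fun w => (g w).im)
      ((Complex.imCLM : ℂ →L[ℝ] ℝ).comp (fderiv ℝ g z)) z :=
    (Complex.imCLM.hasFDerivAt (x := g z)).comp z hg.hasFDerivAt
  rw [h.fderiv]; rfl

end S18


namespace S18X
open S18

lemma clairaut {f : ℂ → ℂ} (hf : ContDiff ℝ 2 f) (z : ℂ) :
    fderiv ℝ (fun w => fderiv ℝ f w 1) z Complex.I
      = fderiv ℝ (fun w => fderiv ℝ f w Complex.I) z 1 := by
  have hd : DifferentiableAt ℝ (fderiv ℝ f) z :=
    ((hf.fderiv_right (m := 1) (by norm_num)).differentiable one_ne_zero) z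
  have hs : IsSymmSndFDerivAt ℝ f z := hf.contDiffAt.isSymmSndFDerivAt (by norm_num)
  rw [fderiv_clm_apply hd (differentiableAt_const _),
      fderiv_clm_apply hd (differentiableAt_const _)]
  simpa using hs.eq Complex.I 1

lemma contDiff_fderiv_apply {f : ℂ → ℂ} (hf : ContDiff ℝ 2 f) (c : ℂ) :
    ContDiff ℝ 1 (fun w => fderiv ℝ f w c) :=
  (hf.fderiv_right (by norm_num)).clm_apply contDiff_const

lemma contDiff_fderiv_applyR {f : ℂ → ℝ} (hf : ContDiff ℝ 2 f) (c : ℂ) :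
    ContDiff ℝ 1 (fun w => fderiv ℝ f w c) :=
  (hf.fderiv_right (by norm_num)).clm_apply contDiff_const

/-- conj composed with a C¹ function is C¹ -/
lemma contDiff_conj {f : ℂ → ℂ} {n : ℕ∞} (hf : ContDiff ℝ n f) :
    ContDiff ℝ n (fun w => (starRingEnd ℂ) (f w)) :=
  (Complex.conjCLE : ℂ →L[ℝ] ℂ).contDiff.comp hf

noncomputable section

variable (φ : ℂ → ℝ) (u : ℂ → ℂ)

def A1 : ℂ → ℝ := fun w => fderiv ℝ φ w 1
def A2 : ℂ → ℝ := fun w => fderiv ℝ φ w Complex.I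
def Bf : ℂ → ℂ := fun w => (((A1 φ w : ℝ) : ℂ) - Complex.I * ((A2 φ w : ℝ) : ℂ)) / 2
def H1 : ℂ → ℂ := fun w => u w * (starRingEnd ℂ) (fderiv ℝ u w Complex.I)
def H2 : ℂ → ℂ := fun w => u w * (starRingEnd ℂ) (fderiv ℝ u w 1)
def H3 : ℂ → ℂ := fun w => u w * (starRingEnd ℂ) (u w) * Bf φ w
def G1 : ℂ → ℝ := fun w => (H1 u w).im - 2 * (H3 φ u w).re
def G2 : ℂ → ℝ := fun w => 2 * (H3 φ u w).im - (H2 u w).im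

variable {φ u}

lemma dbarR_val (hφ : ContDiff ℝ 2 φ) (z : ℂ) :
    dbarR φ z = (((A1 φ z : ℝ) : ℂ) + Complex.I * ((A2 φ z : ℝ) : ℂ)) / 2 := by
  have hd : DifferentiableAt ℝ φ z := (hφ.differentiable (by norm_num)) z
  unfold dbarR dbar A1 A2
  rw [fderiv_ofReal_apply hd, fderiv_ofReal_apply hd]

lemma contDiff_A1 (hφ : ContDiff ℝ 2 φ) : ContDiff ℝ 1 (A1 φ) := contDiff_fderiv_applyR hφ 1
lemma contDiff_A2 (hφ : ContDiff ℝ 2 φ) : ContDiff ℝ 1 (A2 φ) := contDiff_fderiv_applyR hφ _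

lemma contDiff_Bf (hφ : ContDiff ℝ 2 φ) : ContDiff ℝ 1 (Bf φ) := by
  unfold Bf
  exact ((Complex.ofRealCLM.contDiff.comp (contDiff_A1 hφ)).sub
    (contDiff_const.mul (Complex.ofRealCLM.contDiff.comp (contDiff_A2 hφ)))).div_const 2

lemma contDiff_H1 (hu : ContDiff ℝ 2 u) : ContDiff ℝ 1 (H1 u) :=
  (hu.of_le one_le_two).mul (contDiff_conj (contDiff_fderiv_apply hu _))

lemma contDiff_H2 (hu : ContDiff ℝ 2 u) : ContDiff ℝ 1 (H2 u) :=
  (hu.of_le one_le_two).mul (contDiff_conj (contDiff_fderiv_apply hu _))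

lemma contDiff_H3 (hφ : ContDiff ℝ 2 φ) (hu : ContDiff ℝ 2 u) : ContDiff ℝ 1 (H3 φ u) :=
  (((hu.of_le one_le_two).mul (contDiff_conj (hu.of_le one_le_two)))).mul (contDiff_Bf hφ)

lemma contDiff_G1 (hφ : ContDiff ℝ 2 φ) (hu : ContDiff ℝ 2 u) : ContDiff ℝ 1 (G1 φ u) := by
  unfold G1
  exact (Complex.imCLM.contDiff.comp (contDiff_H1 hu)).sub
    (contDiff_const.mul (Complex.reCLM.contDiff.comp (contDiff_H3 hφ hu)))

lemma contDiff_G2 (hφ : ContDiff ℝ 2 φ) (hu : ContDiff ℝ 2 u) : ContDiff ℝ 1 (G2 φ u) := by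
  unfold G2
  exact (contDiff_const.mul (Complex.imCLM.contDiff.comp (contDiff_H3 hφ hu))).sub
    (Complex.imCLM.contDiff.comp (contDiff_H2 hu))


lemma pointwise (hφ : ContDiff ℝ 2 φ) (hu : ContDiff ℝ 2 u) (z : ℂ) :
    Complex.normSq (dbar u z - u z * dbarR φ z)
      = Complex.normSq (dee u z + u z * Bf φ z)
        + 2 * Complex.normSq (u z) * lapHat φ z
        + (fderiv ℝ (G1 φ u) z 1 + fderiv ℝ (G2 φ u) z Complex.I) / 2 := by
  have hud : DifferentiableAt ℝ u z := (hu.differentiable two_ne_zero) z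
  have huxd : DifferentiableAt ℝ (fun w => fderiv ℝ u w 1) z :=
    ((contDiff_fderiv_apply hu 1).differentiable one_ne_zero) z
  have huyd : DifferentiableAt ℝ (fun w => fderiv ℝ u w Complex.I) z :=
    ((contDiff_fderiv_apply hu Complex.I).differentiable one_ne_zero) z
  have hcud : DifferentiableAt ℝ (fun w => (starRingEnd ℂ) (u w)) z :=
    ((contDiff_conj (hu.of_le one_le_two)).differentiable one_ne_zero) z
  have hcuxd : DifferentiableAt ℝ (fun w => (starRingEnd ℂ) (fderiv ℝ u w 1)) z :=
    ((contDiff_conj (contDiff_fderiv_apply hu 1)).differentiable one_ne_zero) z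
  have hcuyd : DifferentiableAt ℝ (fun w => (starRingEnd ℂ) (fderiv ℝ u w Complex.I)) z :=
    ((contDiff_conj (contDiff_fderiv_apply hu Complex.I)).differentiable one_ne_zero) z
  have hBd : DifferentiableAt ℝ (Bf φ) z := ((contDiff_Bf hφ).differentiable one_ne_zero) z
  have huu : DifferentiableAt ℝ (fun w => u w * (starRingEnd ℂ) (u w)) z := hud.mul hcud
  have hA1d : DifferentiableAt ℝ (A1 φ) z := ((contDiff_A1 hφ).differentiable one_ne_zero) z
  have hA2d : DifferentiableAt ℝ (A2 φ) z := ((contDiff_A2 hφ).differentiable one_ne_zero) z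
  have hH1d : DifferentiableAt ℝ (H1 u) z :=
    ((contDiff_H1 hu).differentiable one_ne_zero) z
  have hH2d : DifferentiableAt ℝ (H2 u) z :=
    ((contDiff_H2 hu).differentiable one_ne_zero) z
  have hH3d : DifferentiableAt ℝ (H3 φ u) z :=
    ((contDiff_H3 hφ hu).differentiable one_ne_zero) z
  have hBf' : ∀ d, fderiv ℝ (Bf φ) z d
      = (((fderiv ℝ (A1 φ) z d : ℝ) : ℂ) - Complex.I * ((fderiv ℝ (A2 φ) z d : ℝ) : ℂ)) / 2 := by
    intro d
    have h1 : HasFDerivAt (fun w => ((A1 φ w : ℝ) : ℂ))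
        ((Complex.ofRealCLM : ℝ →L[ℝ] ℂ).comp (fderiv ℝ (A1 φ) z)) z :=
      (Complex.ofRealCLM.hasFDerivAt).comp z hA1d.hasFDerivAt
    have h2 : HasFDerivAt (fun w => ((A2 φ w : ℝ) : ℂ))
        ((Complex.ofRealCLM : ℝ →L[ℝ] ℂ).comp (fderiv ℝ (A2 φ) z)) z :=
      (Complex.ofRealCLM.hasFDerivAt).comp z hA2d.hasFDerivAt
    have h3 := (h1.fun_sub (h2.const_mul Complex.I)).mul_const ((2:ℂ)⁻¹)
    unfold Bf
    simp only [div_eq_mul_inv]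
    rw [h3.fderiv]
    simp [div_eq_mul_inv]
    ring
  have eH1 : fderiv ℝ (H1 u) z 1
      = fderiv ℝ u z 1 * (starRingEnd ℂ) (fderiv ℝ u z Complex.I)
        + u z * (starRingEnd ℂ) (fderiv ℝ (fun w => fderiv ℝ u w Complex.I) z 1) := by
    unfold H1
    rw [fderiv_mul_apply hud hcuyd, fderiv_conj_apply huyd]
  have eH2 : fderiv ℝ (H2 u) z Complex.I
      = fderiv ℝ u z Complex.I * (starRingEnd ℂ) (fderiv ℝ u z 1)
        + u z * (starRingEnd ℂ) (fderiv ℝ (fun w => fderiv ℝ u w Complex.I) z 1) := by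
    unfold H2
    rw [fderiv_mul_apply hud hcuxd, fderiv_conj_apply huxd, clairaut hu z]
  have eH3 : ∀ d, fderiv ℝ (H3 φ u) z d
      = (fderiv ℝ u z d * (starRingEnd ℂ) (u z) + u z * (starRingEnd ℂ) (fderiv ℝ u z d)) * Bf φ z
        + u z * (starRingEnd ℂ) (u z) * fderiv ℝ (Bf φ) z d := by
    intro d
    unfold H3
    rw [fderiv_mul_apply huu hBd, fderiv_mul_apply hud hcud, fderiv_conj_apply hud]
  have eG1 : fderiv ℝ (G1 φ u) z 1
      = (fderiv ℝ (H1 u) z 1).im - 2 * (fderiv ℝ (H3 φ u) z 1).re := by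
    unfold G1
    have d1 : DifferentiableAt ℝ (fun w => (H1 u w).im) z :=
      ((Complex.imCLM.contDiff.comp (contDiff_H1 hu)).differentiable one_ne_zero) z
    have d2 : DifferentiableAt ℝ (fun w => (H3 φ u w).re) z :=
      ((Complex.reCLM.contDiff.comp (contDiff_H3 hφ hu)).differentiable one_ne_zero) z
    rw [fderiv_fun_sub d1 (d2.const_mul 2)]
    simp only [ContinuousLinearMap.sub_apply]
    rw [fderiv_im_apply hH1d, fderiv_const_mul d2 2]
    simp only [ContinuousLinearMap.smul_apply, smul_eq_mul]
    rw [fderiv_re_apply hH3d]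
  have eG2 : fderiv ℝ (G2 φ u) z Complex.I
      = 2 * (fderiv ℝ (H3 φ u) z Complex.I).im - (fderiv ℝ (H2 u) z Complex.I).im := by
    unfold G2
    have d1 : DifferentiableAt ℝ (fun w => (H3 φ u w).im) z :=
      ((Complex.imCLM.contDiff.comp (contDiff_H3 hφ hu)).differentiable one_ne_zero) z
    have d2 : DifferentiableAt ℝ (fun w => (H2 u w).im) z :=
      ((Complex.imCLM.contDiff.comp (contDiff_H2 hu)).differentiable one_ne_zero) z
    rw [fderiv_fun_sub (d1.const_mul 2) d2]
    simp only [ContinuousLinearMap.sub_apply]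
    rw [fderiv_const_mul d1 2]
    simp only [ContinuousLinearMap.smul_apply, smul_eq_mul]
    rw [fderiv_im_apply hH3d, fderiv_im_apply hH2d]
  have elap : lapHat φ z = (fderiv ℝ (A1 φ) z 1 + fderiv ℝ (A2 φ) z Complex.I) / 4 := rfl
  have edbar : dbar u z = (fderiv ℝ u z 1 + Complex.I * fderiv ℝ u z Complex.I) / 2 := rfl
  have edee : dee u z = (fderiv ℝ u z 1 - Complex.I * fderiv ℝ u z Complex.I) / 2 := rfl
  have eB : Bf φ z = (((A1 φ z : ℝ) : ℂ) - Complex.I * ((A2 φ z : ℝ) : ℂ)) / 2 := rfl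
  rw [eG1, eG2, eH1, eH2, eH3 1, eH3 Complex.I, hBf' 1, hBf' Complex.I,
    dbarR_val hφ z, elap, edbar, edee, eB]
  generalize u z = V
  generalize fderiv ℝ u z 1 = P1
  generalize fderiv ℝ u z Complex.I = P2
  generalize fderiv ℝ (fun w => fderiv ℝ u w Complex.I) z 1 = Q
  generalize A1 φ z = a1
  generalize A2 φ z = a2
  generalize fderiv ℝ (A1 φ) z 1 = b11
  generalize fderiv ℝ (A2 φ) z 1 = b12
  generalize fderiv ℝ (A1 φ) z Complex.I = b21
  generalize fderiv ℝ (A2 φ) z Complex.I = b22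
  simp only [Complex.normSq_apply, Complex.add_re, Complex.add_im, Complex.sub_re,
    Complex.sub_im, Complex.mul_re, Complex.mul_im, Complex.I_re, Complex.I_im,
    Complex.ofReal_re, Complex.ofReal_im, Complex.conj_re, Complex.conj_im,
    Complex.div_re, Complex.div_im, Complex.normSq_ofNat, Complex.one_re, Complex.one_im,
    Complex.re_ofNat, Complex.im_ofNat]
  ring

lemma continuous_fderiv_app {F : Type*} [NormedAddCommGroup F] [NormedSpace ℝ F]
    {g : ℂ → F} (hg : ContDiff ℝ 1 g) (d : ℂ) : Continuous fun z => fderiv ℝ g z d :=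
  (ContinuousLinearMap.apply ℝ F d).continuous.comp (hg.continuous_fderiv one_ne_zero)

lemma fderiv_zero_of_nmem {F : Type*} [NormedAddCommGroup F] [NormedSpace ℝ F]
    {g : ℂ → F} {x : ℂ} (hx : x ∉ tsupport g) : fderiv ℝ g x = 0 := by
  by_contra h
  exact hx (support_fderiv_subset ℝ (by simpa [Function.mem_support] using h))

lemma integral_fderiv_zero {g : ℂ → ℝ} (hg : ContDiff ℝ 1 g) (hgc : HasCompactSupport g)
    (d : ℂ) : ∫ z : ℂ, fderiv ℝ g z d = 0 := by
  have hcont : Continuous fun z => fderiv ℝ g z d := continuous_fderiv_app hg d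
  have hsupp : HasCompactSupport fun z => fderiv ℝ g z d := by
    apply HasCompactSupport.intro hgc
    intro x hx
    rw [fderiv_zero_of_nmem hx]; rfl
  have h := integral_mul_fderiv_eq_neg_fderiv_mul_of_integrable
    (f := fun _ : ℂ => (1:ℝ)) (g := g) (v := d) (μ := volume)
    ?_ ?_ ?_ (fun x _ => differentiableAt_const (1:ℝ)) (fun x _ => (hg.differentiable one_ne_zero) x)
  · simpa using h
  · simp only [fderiv_fun_const]
    simp
  · simpa using hcont.integrable_of_hasCompactSupport hsupp
  · simpa using hg.continuous.integrable_of_hasCompactSupport hgc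

lemma key_ineq (hφ : ContDiff ℝ 2 φ) (hu : ContDiff ℝ 2 u) (huc : HasCompactSupport u) :
    2 * ∫ z : ℂ, Complex.normSq (u z) * lapHat φ z
      ≤ ∫ z : ℂ, Complex.normSq (dbar u z - u z * dbarR φ z) := by
  -- continuity facts
  have hcu : Continuous u := hu.continuous
  have hcux : Continuous fun z => fderiv ℝ u z 1 :=
    continuous_fderiv_app (hu.of_le one_le_two) 1
  have hcuy : Continuous fun z => fderiv ℝ u z Complex.I :=
    continuous_fderiv_app (hu.of_le one_le_two) Complex.I
  have hcdbar : Continuous (dbar u) := by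
    unfold dbar; exact ((hcux.add (continuous_const.mul hcuy)).div_const 2)
  have hcdee : Continuous (dee u) := by
    unfold dee; exact ((hcux.sub (continuous_const.mul hcuy)).div_const 2)
  have hcA1 : Continuous (A1 φ) := (contDiff_A1 hφ).continuous
  have hcA2 : Continuous (A2 φ) := (contDiff_A2 hφ).continuous
  have hcB : Continuous (Bf φ) := (contDiff_Bf hφ).continuous
  have hcdbarR : Continuous (dbarR φ) := by
    have : dbarR φ = fun z => (((A1 φ z : ℝ) : ℂ) + Complex.I * ((A2 φ z : ℝ) : ℂ)) / 2 :=
      funext (dbarR_val hφ)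
    rw [this]
    exact ((Complex.continuous_ofReal.comp hcA1).add
      (continuous_const.mul (Complex.continuous_ofReal.comp hcA2))).div_const 2
  have hclap : Continuous (lapHat φ) := by
    have : lapHat φ = fun z => (fderiv ℝ (A1 φ) z 1 + fderiv ℝ (A2 φ) z Complex.I) / 4 := rfl
    rw [this]
    exact ((continuous_fderiv_app (contDiff_A1 hφ) 1).add
      (continuous_fderiv_app (contDiff_A2 hφ) Complex.I)).div_const 4
  have hDG1 : Continuous fun z => fderiv ℝ (G1 φ u) z 1 :=
    continuous_fderiv_app (contDiff_G1 hφ hu) 1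
  have hDG2 : Continuous fun z => fderiv ℝ (G2 φ u) z Complex.I :=
    continuous_fderiv_app (contDiff_G2 hφ hu) Complex.I
  -- support facts
  have hG1supp : tsupport (G1 φ u) ⊆ tsupport u := by
    apply closure_minimal _ (isClosed_tsupport u)
    intro x hx
    by_contra hxu
    have hu0 : u x = 0 := image_eq_zero_of_notMem_tsupport hxu
    have : G1 φ u x = 0 := by unfold G1 H1 H3; rw [hu0]; simp
    rw [Function.mem_support] at hx
    exact hx this
  have hG2supp : tsupport (G2 φ u) ⊆ tsupport u := by
    apply closure_minimal _ (isClosed_tsupport u)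
    intro x hx
    by_contra hxu
    have hu0 : u x = 0 := image_eq_zero_of_notMem_tsupport hxu
    have : G2 φ u x = 0 := by unfold G2 H2 H3; rw [hu0]; simp
    rw [Function.mem_support] at hx
    exact hx this
  have hG1c : HasCompactSupport (G1 φ u) :=
    IsCompact.of_isClosed_subset huc (isClosed_tsupport _) hG1supp
  have hG2c : HasCompactSupport (G2 φ u) :=
    IsCompact.of_isClosed_subset huc (isClosed_tsupport _) hG2supp
  -- the four integrands
  set fT := fun z => Complex.normSq (dbar u z - u z * dbarR φ z) with hfT
  set fS := fun z => Complex.normSq (dee u z + u z * Bf φ z) with hfS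
  set fL := fun z => 2 * Complex.normSq (u z) * lapHat φ z with hfL
  set fD := fun z => (fderiv ℝ (G1 φ u) z 1 + fderiv ℝ (G2 φ u) z Complex.I) / 2 with hfD
  have hTc : Continuous fT := by
    apply Complex.continuous_normSq.comp
    exact hcdbar.sub (hcu.mul hcdbarR)
  have hSc : Continuous fS := by
    apply Complex.continuous_normSq.comp
    exact hcdee.add (hcu.mul hcB)
  have hLc : Continuous fL :=
    (continuous_const.mul (Complex.continuous_normSq.comp hcu)).mul hclap
  have hDc : Continuous fD := (hDG1.add hDG2).div_const 2
  have hTsupp : HasCompactSupport fT := by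
    apply HasCompactSupport.intro huc
    intro x hx
    have hu0 : u x = 0 := image_eq_zero_of_notMem_tsupport hx
    have hdx : dbar u x = 0 := by
      unfold dbar; rw [fderiv_zero_of_nmem hx]; simp
    simp [hfT, hu0, hdx]
  have hSsupp : HasCompactSupport fS := by
    apply HasCompactSupport.intro huc
    intro x hx
    have hu0 : u x = 0 := image_eq_zero_of_notMem_tsupport hx
    have hdx : dee u x = 0 := by
      unfold dee; rw [fderiv_zero_of_nmem hx]; simp
    simp [hfS, hu0, hdx]
  have hLsupp : HasCompactSupport fL := by
    apply HasCompactSupport.intro huc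
    intro x hx
    have hu0 : u x = 0 := image_eq_zero_of_notMem_tsupport hx
    simp [hfL, hu0]
  have hDsupp : HasCompactSupport fD := by
    apply HasCompactSupport.intro huc
    intro x hx
    have h1 : fderiv ℝ (G1 φ u) x = 0 := fderiv_zero_of_nmem (fun hmem => hx (hG1supp hmem))
    have h2 : fderiv ℝ (G2 φ u) x = 0 := fderiv_zero_of_nmem (fun hmem => hx (hG2supp hmem))
    simp [hfD, h1, h2]
  have hTi : Integrable fT volume := hTc.integrable_of_hasCompactSupport hTsupp
  have hSi : Integrable fS volume := hSc.integrable_of_hasCompactSupport hSsupp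
  have hLi : Integrable fL volume := hLc.integrable_of_hasCompactSupport hLsupp
  have hDi : Integrable fD volume := hDc.integrable_of_hasCompactSupport hDsupp
  -- pointwise identity
  have hpt : fT = fun z => fS z + fL z + fD z := by
    funext z
    exact pointwise hφ hu z
  -- integral of divergence term vanishes
  have hDzero : ∫ z : ℂ, fD z = 0 := by
    have h1 : Integrable (fun z : ℂ => fderiv ℝ (G1 φ u) z 1) volume := by
      apply hDG1.integrable_of_hasCompactSupport
      apply HasCompactSupport.intro hG1c
      intro x hx
      rw [fderiv_zero_of_nmem hx]; rfl
    have h2 : Integrable (fun z : ℂ => fderiv ℝ (G2 φ u) z Complex.I) volume := by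
      apply hDG2.integrable_of_hasCompactSupport
      apply HasCompactSupport.intro hG2c
      intro x hx
      rw [fderiv_zero_of_nmem hx]; rfl
    rw [hfD]
    rw [integral_div]
    rw [integral_add h1 h2]
    rw [integral_fderiv_zero (contDiff_G1 hφ hu) hG1c 1,
        integral_fderiv_zero (contDiff_G2 hφ hu) hG2c Complex.I]
    norm_num
  have hsplit : ∫ z : ℂ, fT z = (∫ z : ℂ, fS z) + (∫ z : ℂ, fL z) + (∫ z : ℂ, fD z) := by
    have hSLi : Integrable (fun z => fS z + fL z) volume := hSi.add hLi
    rw [hpt]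
    rw [integral_add hSLi hDi]
    rw [integral_add hSi hLi]
  have hSnn : 0 ≤ ∫ z : ℂ, fS z := integral_nonneg fun z => Complex.normSq_nonneg _
  have h2L : 2 * ∫ z : ℂ, Complex.normSq (u z) * lapHat φ z = ∫ z : ℂ, fL z := by
    rw [← integral_const_mul]
    congr 1
    funext z
    rw [hfL]; ring
  rw [h2L]
  rw [hsplit, hDzero]
  linarith

lemma continuous_lapHat (hφ : ContDiff ℝ 2 φ) : Continuous (lapHat φ) := by
  have : lapHat φ = fun z => (fderiv ℝ (A1 φ) z 1 + fderiv ℝ (A2 φ) z Complex.I) / 4 := rfl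
  rw [this]
  exact ((continuous_fderiv_app (contDiff_A1 hφ) 1).add
    (continuous_fderiv_app (contDiff_A2 hφ) Complex.I)).div_const 4

lemma continuous_T (hφ : ContDiff ℝ 2 φ) (hu : ContDiff ℝ 2 u) :
    Continuous (fun z => dbar u z - u z * dbarR φ z) := by
  have hcux : Continuous fun z => fderiv ℝ u z 1 :=
    continuous_fderiv_app (hu.of_le one_le_two) 1
  have hcuy : Continuous fun z => fderiv ℝ u z Complex.I :=
    continuous_fderiv_app (hu.of_le one_le_two) Complex.I
  have hcdbar : Continuous (dbar u) := by
    unfold dbar; exact ((hcux.add (continuous_const.mul hcuy)).div_const 2)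
  have hcdbarR : Continuous (dbarR φ) := by
    have : dbarR φ = fun z => (((A1 φ z : ℝ) : ℂ) + Complex.I * ((A2 φ z : ℝ) : ℂ)) / 2 :=
      funext (dbarR_val hφ)
    rw [this]
    exact ((Complex.continuous_ofReal.comp (contDiff_A1 hφ).continuous).add
      (continuous_const.mul (Complex.continuous_ofReal.comp
        (contDiff_A2 hφ).continuous))).div_const 2
  exact hcdbar.sub (hu.continuous.mul hcdbarR)

lemma hcs_T (hu : ContDiff ℝ 2 u) (huc : HasCompactSupport u) :
    HasCompactSupport (fun z => dbar u z - u z * dbarR φ z) := by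
  apply HasCompactSupport.intro huc
  intro x hx
  have hu0 : u x = 0 := image_eq_zero_of_notMem_tsupport hx
  have hdx : dbar u x = 0 := by
    unfold dbar; rw [fderiv_zero_of_nmem hx]; simp
  simp [hu0, hdx]

lemma eLpNorm_sq {f : ℂ → ℂ} (hf : Continuous f) (hfc : HasCompactSupport f) :
    eLpNorm f 2 volume
      = ENNReal.ofReal ((∫ z : ℂ, Complex.normSq (f z)) ^ (2:ℝ)⁻¹) := by
  rw [(hf.memLp_of_hasCompactSupport hfc).eLpNorm_eq_integral_rpow_norm two_ne_zero
    ENNReal.ofNat_ne_top]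
  congr 2
  · congr 1
    funext z
    rw [ENNReal.toReal_ofNat, show (2:ℝ) = ((2:ℕ):ℝ) by norm_num, Real.rpow_natCast,
      Complex.sq_norm]

lemma eLpNorm_est (hφ : ContDiff ℝ 2 φ) (hpos : ∀ z, 0 ≤ lapHat φ z)
    (hu : ContDiff ℝ 2 u) (huc : HasCompactSupport u) :
    eLpNorm (fun z => u z * (Real.sqrt (lapHat φ z) : ℂ)) 2 volume
      ≤ eLpNorm (fun z => dbar u z - u z * dbarR φ z) 2 volume := by
  have hclap := continuous_lapHat hφ
  have hcf : Continuous fun z => u z * (Real.sqrt (lapHat φ z) : ℂ) :=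
    hu.continuous.mul (Complex.continuous_ofReal.comp (Real.continuous_sqrt.comp hclap))
  have hcfc : HasCompactSupport fun z => u z * (Real.sqrt (lapHat φ z) : ℂ) := by
    apply HasCompactSupport.intro huc
    intro x hx
    rw [image_eq_zero_of_notMem_tsupport hx, zero_mul]
  rw [eLpNorm_sq hcf hcfc, eLpNorm_sq (continuous_T hφ hu) (hcs_T hu huc)]
  apply ENNReal.ofReal_le_ofReal
  apply Real.rpow_le_rpow (integral_nonneg fun z => Complex.normSq_nonneg _) _ (by norm_num)
  have hsq : ∀ z, Complex.normSq (u z * (Real.sqrt (lapHat φ z) : ℂ))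
      = Complex.normSq (u z) * lapHat φ z := by
    intro z
    rw [Complex.normSq_mul, Complex.normSq_ofReal, Real.mul_self_sqrt (hpos z)]
  rw [integral_congr_ae (Filter.Eventually.of_forall fun z => hsq z)]
  have h0 : 0 ≤ ∫ z : ℂ, Complex.normSq (u z) * lapHat φ z :=
    integral_nonneg fun z => mul_nonneg (Complex.normSq_nonneg _) (hpos z)
  have := key_ineq hφ hu huc
  linarith

end

end S18X

theorem stmt18 (φ : ℂ → ℝ) (hφ : ContDiff ℝ 2 φ) (hpos : ∀ z, 0 < lapHat φ z)
    (v : ℕ → ℂ → ℂ) (hv : ∀ j, ContDiff ℝ (⊤ : ℕ∞) (v j)) (hvc : ∀ j, HasCompactSupport (v j))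
    (hcauchy : ∀ ε : ℝ, 0 < ε → ∃ N : ℕ, ∀ m ≥ N, ∀ n ≥ N,
      eLpNorm (fun z => (dbar (v m) z - v m z * dbarR φ z) -
        (dbar (v n) z - v n z * dbarR φ z)) 2 volume < ENNReal.ofReal ε) :
    (∀ ε : ℝ, 0 < ε → ∃ N : ℕ, ∀ m ≥ N, ∀ n ≥ N,
      eLpNorm (fun z => (v m z - v n z) * (Real.sqrt (lapHat φ z) : ℂ)) 2 volume <
        ENNReal.ofReal ε) ∧
    ∀ K : Set ℂ, IsCompact K → ∃ w : ℂ → ℂ,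
      Tendsto (fun j => eLpNorm (K.indicator (fun z => v j z - w z)) 2 volume)
        atTop (nhds 0) := by
  have hv2 : ∀ j, ContDiff ℝ 2 (v j) := fun j => (hv j).of_le (WithTop.coe_le_coe.2 le_top)
  have main : ∀ m n : ℕ,
      eLpNorm (fun z => (v m z - v n z) * (Real.sqrt (lapHat φ z) : ℂ)) 2 volume
        ≤ eLpNorm (fun z => (dbar (v m) z - v m z * dbarR φ z) -
            (dbar (v n) z - v n z * dbarR φ z)) 2 volume := by
    intro m n
    have hu : ContDiff ℝ 2 (fun z => v m z - v n z) := (hv2 m).sub (hv2 n)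
    have huc : HasCompactSupport (fun z => v m z - v n z) := by
      apply HasCompactSupport.intro ((hvc m).union (hvc n))
      intro x hx
      rw [Set.mem_union] at hx
      push_neg at hx
      rw [image_eq_zero_of_notMem_tsupport hx.1, image_eq_zero_of_notMem_tsupport hx.2, sub_zero]
    have heq : (fun z => (dbar (v m) z - v m z * dbarR φ z) -
        (dbar (v n) z - v n z * dbarR φ z))
        = fun z => dbar (fun w => v m w - v n w) z - (v m z - v n z) * dbarR φ z := by
      funext z
      have hm : DifferentiableAt ℝ (v m) z := ((hv2 m).differentiable two_ne_zero) z
      have hn : DifferentiableAt ℝ (v n) z := ((hv2 n).differentiable two_ne_zero) z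
      have hd : dbar (fun w => v m w - v n w) z = dbar (v m) z - dbar (v n) z := by
        unfold dbar
        rw [fderiv_fun_sub hm hn]
        simp only [ContinuousLinearMap.sub_apply]
        ring
      rw [hd]; ring
    rw [heq]
    exact S18X.eLpNorm_est hφ (fun z => (hpos z).le) hu huc
  refine ⟨fun ε hε => ?_, fun K hK => ?_⟩
  · obtain ⟨N, hN⟩ := hcauchy ε hε
    exact ⟨N, fun m hm n hn => lt_of_le_of_lt (main m n) (hN m hm n hn)⟩
  · rcases K.eq_empty_or_nonempty with rfl | hne
    · refine ⟨0, ?_⟩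
      simp only [Set.indicator_empty]
      simpa using (tendsto_const_nhds :
        Tendsto (fun _ : ℕ => (0 : ENNReal)) atTop (nhds 0))
    · have hclap := S18X.continuous_lapHat hφ
      obtain ⟨z0, hz0K, hz0⟩ := hK.exists_isMinOn hne hclap.continuousOn
      set c : ℝ := Real.sqrt (lapHat φ z0) with hc
      have hcpos : 0 < c := Real.sqrt_pos.2 (hpos z0)
      have hmem : ∀ j, MemLp (K.indicator (v j)) 2 (volume : Measure ℂ) := fun j =>
        ((hv2 j).continuous.memLp_of_hasCompactSupport (hvc j)).indicator
          hK.isClosed.measurableSet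
      set L : ℕ → Lp ℂ 2 (volume : Measure ℂ) := fun j => (hmem j).toLp _ with hLdef
      have hest : ∀ m n : ℕ,
          ENNReal.ofReal c * eLpNorm (K.indicator (fun z => v m z - v n z)) 2 volume
            ≤ eLpNorm (fun z => (v m z - v n z) * (Real.sqrt (lapHat φ z) : ℂ)) 2 volume := by
        intro m n
        have hsmul : eLpNorm (c • (K.indicator (fun z => v m z - v n z))) 2 volume
            ≤ eLpNorm (fun z => (v m z - v n z) * (Real.sqrt (lapHat φ z) : ℂ)) 2 volume := by
          apply eLpNorm_mono
          intro z
          by_cases hzK : z ∈ K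
          · simp only [Pi.smul_apply, Set.indicator_of_mem hzK]
            rw [norm_smul, norm_mul]
            have h2 : ‖((Real.sqrt (lapHat φ z) : ℝ) : ℂ)‖ = Real.sqrt (lapHat φ z) := by
              rw [Complex.norm_real]
              exact _root_.abs_of_nonneg (Real.sqrt_nonneg _)
            rw [h2]
            have hcle : ‖c‖ ≤ Real.sqrt (lapHat φ z) := by
              rw [Real.norm_eq_abs, _root_.abs_of_nonneg hcpos.le]
              exact Real.sqrt_le_sqrt (hz0 hzK)
            rw [mul_comm]
            exact mul_le_mul_of_nonneg_left hcle (norm_nonneg _) |>.trans_eq (by ring)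
          · simp only [Pi.smul_apply, Set.indicator_of_notMem hzK, smul_zero, norm_zero]
            exact norm_nonneg _
        calc ENNReal.ofReal c * eLpNorm (K.indicator fun z => v m z - v n z) 2 volume
            = eLpNorm (c • (K.indicator fun z => v m z - v n z)) 2 volume := by
              rw [eLpNorm_const_smul]
              congr 1
              rw [Real.enorm_eq_ofReal hcpos.le]
          _ ≤ _ := hsmul
      have hLcauchy : CauchySeq L := by
        rw [Metric.cauchySeq_iff]
        intro ε hε
        obtain ⟨N, hN⟩ := hcauchy (ε * c) (mul_pos hε hcpos)
        refine ⟨N, fun m hm n hn => ?_⟩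
        have h2 := (hest m n).trans_lt ((main m n).trans_lt (hN m hm n hn))
        rw [ENNReal.ofReal_mul hε.le, mul_comm (ENNReal.ofReal ε) _] at h2
        have hc0 : (ENNReal.ofReal c) ≠ 0 := by
          simp [ENNReal.ofReal_eq_zero, not_le, hcpos]
        have h1 : eLpNorm (K.indicator fun z => v m z - v n z) 2 volume
            < ENNReal.ofReal ε :=
          (ENNReal.mul_lt_mul_iff_right hc0 ENNReal.ofReal_ne_top).1 h2
        rw [Lp.dist_def]
        have heqae : eLpNorm (⇑(L m) - ⇑(L n)) 2 volume
            = eLpNorm (K.indicator fun z => v m z - v n z) 2 volume := by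
          apply eLpNorm_congr_ae
          filter_upwards [(hmem m).coeFn_toLp, (hmem n).coeFn_toLp] with z e1 e2
          have : (⇑(L m) - ⇑(L n)) z = K.indicator (v m) z - K.indicator (v n) z := by
            simp only [Pi.sub_apply]; rw [e1, e2]
          rw [this]
          by_cases hzK : z ∈ K
          · simp [Set.indicator_of_mem hzK]
          · simp [Set.indicator_of_notMem hzK]
        rw [heqae]
        exact ENNReal.toReal_lt_of_lt_ofReal h1
      obtain ⟨G, hG⟩ := cauchySeq_tendsto_of_complete hLcauchy
      refine ⟨⇑G, ?_⟩
      have hle : ∀ j, eLpNorm (K.indicator fun z => v j z - G z) 2 volume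
          ≤ edist (L j) G := by
        intro j
        have hswap : (K.indicator fun z => v j z - G z)
            = K.indicator fun z => K.indicator (v j) z - G z := by
          funext z
          by_cases hzK : z ∈ K
          · simp [Set.indicator_of_mem hzK]
          · simp [Set.indicator_of_notMem hzK]
        rw [hswap]
        have hae : (K.indicator fun z => K.indicator (v j) z - G z)
            =ᵐ[volume] K.indicator fun z => (L j) z - G z := by
          filter_upwards [(hmem j).coeFn_toLp] with z e1
          by_cases hzK : z ∈ K
          · simp only [Set.indicator_of_mem hzK]
            rw [e1, Set.indicator_of_mem hzK]
          · simp [Set.indicator_of_notMem hzK]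
        rw [eLpNorm_congr_ae hae]
        calc eLpNorm (K.indicator fun z => (L j) z - G z) 2 volume
            ≤ eLpNorm (fun z => (L j) z - G z) 2 volume := eLpNorm_indicator_le _
          _ = eLpNorm (⇑(L j) - ⇑G) 2 volume := by rfl
          _ = edist (L j) G := (Lp.edist_def _ _).symm
      have htend : Tendsto (fun j => edist (L j) G) atTop (nhds 0) := by
        have := hG.edist (tendsto_const_nhds : Tendsto (fun _ : ℕ => G) atTop (nhds G))
        simpa [edist_self] using this
      exact tendsto_of_tendsto_of_tendsto_of_le_of_le tendsto_const_nhds htend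
        (fun j => zero_le) hle
end
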